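/- arXiv:math-ph/0405018 — 2 statements merged into one kernel-verified Lean document; each statement's English description precedes it below -/
import Mathlib

section
/- Let J be the 2L×2L real matrix with block form J = [[0, -I],[I, 0]]. If Π = u uᵀ is the orthogonal projection onto a Lagrangian plane, where u is a 2L×L real matrix with uᵀu = I and uᵀJu = 0, and v₁, v₂ ∈ ℂ^{2L} are two orthonormal eigenvectors of J with J vⱼ = i σⱼ vⱼ for signs σⱼ ∈ {±1}, then (1 + σ₁σ₂) ⟨v₁, Π v₂⟩ = δ₁₂ (where δ₁₂ = 1 if v₁ = v₂ and 0 if v₁ ⊥ v₂). -/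
open Matrix Complex

/-!
The columns of `u` together with those of `J u` form an orthonormal basis of `ℝ^{2L}`, so
`Π - J Π J = u uᵀ + (J u)(J u)ᵀ = 1`. Sandwiching this identity between `v₁` and `v₂` and letting
`J` act on the eigenvectors on either side gives `⟨v₁, v₂⟩ = (1 + σ₁σ₂) ⟨v₁, Π v₂⟩`.
-/

namespace Matrix

section Lagrangian

variable {l R : Type*} [Fintype l] [DecidableEq l] [CommRing R]
  {u : Matrix (l ⊕ l) l R}

theorem fromCols_J_mul_transpose_mul_self (hu_orth : uᵀ * u = 1) (hu_lag : uᵀ * J l R * u = 0) :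
    (fromCols u (J l R * u))ᵀ * fromCols u (J l R * u) = 1 := by
  have hB : uᵀ * (J l R * u) = 0 := by rw [← Matrix.mul_assoc, hu_lag]
  have hC : uᵀ * (J l R)ᵀ * u = 0 := by
    rw [J_transpose, Matrix.mul_neg, Matrix.neg_mul, hu_lag, neg_zero]
  have hD : uᵀ * (J l R)ᵀ * (J l R * u) = 1 := by
    rw [J_transpose, Matrix.mul_neg, Matrix.neg_mul, Matrix.mul_assoc, ← Matrix.mul_assoc (J l R),
      J_squared, Matrix.neg_mul, Matrix.one_mul, Matrix.mul_neg, neg_neg, hu_orth]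
  rw [transpose_fromCols, fromRows_mul_fromCols, transpose_mul, hu_orth, hB, hC, hD,
    fromBlocks_one]

theorem mul_transpose_sub_J_mul_mul_J (hu_orth : uᵀ * u = 1) (hu_lag : uᵀ * J l R * u = 0) :
    u * uᵀ - J l R * (u * uᵀ) * J l R = 1 := by
  have hrow := mul_eq_one_comm.mp (fromCols_J_mul_transpose_mul_self hu_orth hu_lag)
  rw [transpose_fromCols, fromCols_mul_fromRows, transpose_mul, J_transpose] at hrow
  rw [← hrow, sub_eq_add_neg]
  simp only [Matrix.mul_neg, Matrix.mul_assoc]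

end Lagrangian

section SkewHermitian

variable {n R : Type*} [Fintype n] [CommRing R] [StarRing R]
  {K : Matrix n n R} {v₁ v₂ : n → R} {μ₁ μ₂ : R}

theorem star_vecMul_of_conjTranspose_eq_neg (hK : Kᴴ = -K) (hv : K *ᵥ v₁ = μ₁ • v₁) :
    star v₁ ᵥ* K = -(star μ₁ • star v₁) := by
  rw [← star_smul, ← hv, star_mulVec, hK, vecMul_neg, neg_neg]

theorem star_dotProduct_mulVec_sandwich (hK : Kᴴ = -K) (hv₁ : K *ᵥ v₁ = μ₁ • v₁)
    (hv₂ : K *ᵥ v₂ = μ₂ • v₂) (A : Matrix n n R) :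
    star v₁ ⬝ᵥ (K * A * K) *ᵥ v₂ = -(star μ₁ * μ₂) * (star v₁ ⬝ᵥ A *ᵥ v₂) := by
  rw [← mulVec_mulVec, hv₂, dotProduct_mulVec, ← vecMul_vecMul,
    star_vecMul_of_conjTranspose_eq_neg hK hv₁, ← dotProduct_mulVec, mulVec_smul]
  simp only [neg_dotProduct, smul_dotProduct, dotProduct_smul, smul_eq_mul]
  ring

theorem star_dotProduct_eq_of_sub_mul_mul_eq_one [DecidableEq n] (hK : Kᴴ = -K)
    (hv₁ : K *ᵥ v₁ = μ₁ • v₁) (hv₂ : K *ᵥ v₂ = μ₂ • v₂) {P : Matrix n n R} (hP : P - K * P * K = 1) :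
    star v₁ ⬝ᵥ v₂ = (1 + star μ₁ * μ₂) * (star v₁ ⬝ᵥ P *ᵥ v₂) := by
  conv_lhs => rw [← one_mulVec v₂, ← hP]
  rw [sub_mulVec, dotProduct_sub, star_dotProduct_mulVec_sandwich hK hv₁ hv₂]
  ring

end SkewHermitian

theorem conjTranspose_map_ofReal {m n : Type*} (A : Matrix m n ℝ) :
    (A.map ofReal)ᴴ = Aᵀ.map ofReal := by
  ext i j
  simp

end Matrix

theorem stmt0_general (L : ℕ)
    (u : Matrix (Fin L ⊕ Fin L) (Fin L) ℝ)
    (hu_orth : uᵀ * u = 1)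
    (hu_lag : uᵀ * Matrix.J (Fin L) ℝ * u = 0)
    (v₁ v₂ : (Fin L ⊕ Fin L) → ℂ)
    (σ₁ σ₂ : ℝ)
    (hv₁ : (Matrix.J (Fin L) ℝ).map (Complex.ofReal) *ᵥ v₁ = (Complex.I * σ₁) • v₁)
    (hv₂ : (Matrix.J (Fin L) ℝ).map (Complex.ofReal) *ᵥ v₂ = (Complex.I * σ₂) • v₂)
    (hn₁ : star v₁ ⬝ᵥ v₁ = 1)
    (horth : v₁ = v₂ ∨ star v₁ ⬝ᵥ v₂ = 0) :
    (1 + (σ₁ : ℂ) * σ₂) * (star v₁ ⬝ᵥ ((u * uᵀ).map (Complex.ofReal) *ᵥ v₂))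
      = if v₁ = v₂ then 1 else 0 := by
  have hJ : ((J (Fin L) ℝ).map ofReal)ᴴ = -(J (Fin L) ℝ).map ofReal := by
    rw [conjTranspose_map_ofReal, J_transpose, Matrix.map_neg _ ofReal_neg]
  have hP : (u * uᵀ).map ofReal - (J (Fin L) ℝ).map ofReal * (u * uᵀ).map ofReal
      * (J (Fin L) ℝ).map ofReal = 1 := by
    have h := congrArg ofRealHom.mapMatrix (mul_transpose_sub_J_mul_mul_J hu_orth hu_lag)
    simp only [map_sub, map_mul, map_one, RingHom.mapMatrix_apply] at h
    exact h
  have hinner := star_dotProduct_eq_of_sub_mul_mul_eq_one hJ hv₁ hv₂ hP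
  have hσ : star (I * σ₁) * (I * σ₂) = (σ₁ : ℂ) * σ₂ := by
    simp only [star_mul', star_def, conj_I, conj_ofReal]
    linear_combination (-(σ₁ : ℂ) * σ₂) * I_sq
  rw [hσ] at hinner
  rcases horth with rfl | h
  · rw [← hinner, hn₁, if_pos rfl]
  · rw [← hinner, h, if_neg]
    rintro rfl
    exact one_ne_zero (hn₁.symm.trans h)

/-- Lagrangian projection matrix-element lemma: if `Π = u uᵀ` projects onto a
Lagrangian plane and `v₁, v₂` are orthonormal eigenvectors of `J` with
`J vⱼ = i σⱼ vⱼ`, then `(1 + σ₁σ₂) ⟨v₁, Π v₂⟩ = δ₁₂`. -/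
theorem stmt0 (L : ℕ)
    (u : Matrix (Fin L ⊕ Fin L) (Fin L) ℝ)
    (hu_orth : uᵀ * u = 1)
    (hu_lag : uᵀ * Matrix.J (Fin L) ℝ * u = 0)
    (v₁ v₂ : (Fin L ⊕ Fin L) → ℂ)
    (σ₁ σ₂ : ℝ) (hσ₁ : σ₁ = 1 ∨ σ₁ = -1) (hσ₂ : σ₂ = 1 ∨ σ₂ = -1)
    (hv₁ : (Matrix.J (Fin L) ℝ).map (Complex.ofReal) *ᵥ v₁ = (Complex.I * σ₁) • v₁)
    (hv₂ : (Matrix.J (Fin L) ℝ).map (Complex.ofReal) *ᵥ v₂ = (Complex.I * σ₂) • v₂)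
    (hn₁ : star v₁ ⬝ᵥ v₁ = 1) (hn₂ : star v₂ ⬝ᵥ v₂ = 1)
    (horth : v₁ = v₂ ∨ star v₁ ⬝ᵥ v₂ = 0) :
    (1 + (σ₁ : ℂ) * σ₂) * (star v₁ ⬝ᵥ ((u * uᵀ).map (Complex.ofReal) *ᵥ v₂))
      = if v₁ = v₂ then 1 else 0 :=
  stmt0_general L u hu_orth hu_lag v₁ v₂ σ₁ σ₂ hv₁ hv₂ hn₁ horth
end

section
/- Let u ∈ F_L be a Lagrangian frame in ℝ^{2L} (uᵀu = I, uᵀJu = 0), and let v_k, v_l ∈ ℂ^{2L} be orthonormal eigenvectors of J with the same eigenvalue iσ (σ = ±1) and v_k ≠ v_l. Then Σ_{q=1}^{L} ⟨v_k, u_q⟩⟨u_q, v_l⟩ = 0, where u_q denotes the q-th column of u. -/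
open Matrix Complex

/-!
If `u` is a Lagrangian frame, the columns of `u` and of `J u` together form an orthonormal basis,
so `P := u uᵀ` satisfies `P + J P Jᵀ = 1`. For eigenvectors `v, w` of the skew matrix `J` with a
common eigenvalue of modulus one, `⟨v, J P Jᵀ w⟩ = ⟨Jᵀ v, P Jᵀ w⟩ = ⟨v, P w⟩`, hence the cross sum
`⟨v, P w⟩` equals `⟨v, w⟩ - ⟨v, P w⟩`, and it vanishes as `⟨v, w⟩ = 0`.
-/

namespace Matrix

variable {l R : Type*} [Fintype l] [DecidableEq l] [CommRing R]

theorem J_transpose_mul_J : (J l R)ᵀ * J l R = 1 := by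
  rw [J_transpose, Matrix.neg_mul, J_squared, neg_neg]

theorem mul_transpose_add_J_mul_mul_transpose_mul_J_transpose {u : Matrix (l ⊕ l) l R}
    (hu_orth : uᵀ * u = 1) (hu_lag : uᵀ * J l R * u = 0) :
    u * uᵀ + J l R * (u * uᵀ) * (J l R)ᵀ = 1 := by
  have hu_lag' : (J l R * u)ᵀ * u = 0 := by
    rw [transpose_mul, J_transpose, Matrix.mul_neg, Matrix.neg_mul, hu_lag, neg_zero]
  have hM : (fromCols u (J l R * u))ᵀ * fromCols u (J l R * u) = 1 := by
    rw [transpose_fromCols, fromRows_mul_fromCols, hu_lag', ← Matrix.mul_assoc, hu_lag,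
      transpose_mul, Matrix.mul_assoc, ← Matrix.mul_assoc (J l R)ᵀ, J_transpose_mul_J,
      Matrix.one_mul, hu_orth, fromBlocks_one]
  have := mul_eq_one_comm.mp hM
  rwa [transpose_fromCols, fromCols_mul_fromRows, transpose_mul, ← Matrix.mul_assoc,
    Matrix.mul_assoc (J l R)] at this

variable {n m : Type*} [Fintype n] [Fintype m]

theorem sum_dotProduct_col_mul_col_dotProduct (U : Matrix n m R) (v w : n → R) :
    ∑ q, (v ⬝ᵥ fun i => U i q) * ((fun i => U i q) ⬝ᵥ w) = v ⬝ᵥ ((U * Uᵀ) *ᵥ w) := by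
  rw [← mulVec_mulVec, dotProduct_mulVec]
  rfl

theorem star_dotProduct_mul_mul_conjTranspose_mulVec [StarRing R] (B P : Matrix n n R)
    (v w : n → R) :
    star v ⬝ᵥ ((B * P * Bᴴ) *ᵥ w) = star (Bᴴ *ᵥ v) ⬝ᵥ (P *ᵥ (Bᴴ *ᵥ w)) := by
  rw [star_mulVec, conjTranspose_conjTranspose, ← dotProduct_mulVec, Matrix.mul_assoc,
    ← mulVec_mulVec, ← mulVec_mulVec]

theorem star_dotProduct_mul_mul_conjTranspose_mulVec_of_eigen [StarRing R] {B : Matrix n n R}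
    (hB : Bᴴ = -B) (P : Matrix n n R) {μ : R} (hμ : star μ * μ = 1) {v w : n → R}
    (hv : B *ᵥ v = μ • v) (hw : B *ᵥ w = μ • w) :
    star v ⬝ᵥ ((B * P * Bᴴ) *ᵥ w) = star v ⬝ᵥ (P *ᵥ w) := by
  rw [star_dotProduct_mul_mul_conjTranspose_mulVec, hB, neg_mulVec, neg_mulVec, hv, hw,
    star_neg, star_smul, mulVec_neg, mulVec_smul, neg_dotProduct, dotProduct_neg, neg_neg,
    smul_dotProduct, dotProduct_smul, smul_smul, smul_eq_mul, hμ, one_mul]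

end Matrix

theorem stmt12_general (L : ℕ)
    (u : Matrix (Fin L ⊕ Fin L) (Fin L) ℝ)
    (hu_orth : uᵀ * u = 1)
    (hu_lag : uᵀ * Matrix.J (Fin L) ℝ * u = 0)
    (vk vl : (Fin L ⊕ Fin L) → ℂ)
    (σ : ℝ) (hσ : σ = 1 ∨ σ = -1)
    (hvk : (Matrix.J (Fin L) ℝ).map Complex.ofReal *ᵥ vk = (Complex.I * σ) • vk)
    (hvl : (Matrix.J (Fin L) ℝ).map Complex.ofReal *ᵥ vl = (Complex.I * σ) • vl)
    (horth : star vk ⬝ᵥ vl = 0) :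
    ∑ q : Fin L,
        (star vk ⬝ᵥ fun i => (u i q : ℂ)) * ((fun i => ((u i q : ℝ) : ℂ)) ⬝ᵥ vl)
      = 0 := by
  set Jc := (J (Fin L) ℝ).map ofReal
  set P := (u * uᵀ).map ofReal
  have hJc_conjTranspose : Jcᴴ = (J (Fin L) ℝ)ᵀ.map ofReal := by
    rw [← conjTranspose_map _ fun _ => by simp, conjTranspose_eq_transpose_of_trivial]
  have hJc_skew : Jcᴴ = -Jc := by
    rw [hJc_conjTranspose, J_transpose, Matrix.map_neg _ ofReal_neg]
  have hP : P + Jc * P * Jcᴴ = 1 := by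
    have := congrArg ofRealHom.mapMatrix
      (mul_transpose_add_J_mul_mul_transpose_mul_J_transpose hu_orth hu_lag)
    rw [map_add, map_mul, map_mul, map_one] at this
    rwa [hJc_conjTranspose]
  have hσ_unit : star (I * σ) * (I * σ) = 1 := by
    rcases hσ with rfl | rfl <;> simp
  have hS : star vk ⬝ᵥ (P *ᵥ vl) + star vk ⬝ᵥ (P *ᵥ vl) = 0 := by
    have := congrArg (fun M => star vk ⬝ᵥ (M *ᵥ vl)) hP
    simp only [add_mulVec, dotProduct_add, one_mulVec, horth] at this
    rwa [star_dotProduct_mul_mul_conjTranspose_mulVec_of_eigen hJc_skew P hσ_unit hvk hvl] at this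
  have hsum : ∑ q : Fin L, (star vk ⬝ᵥ fun i => (u i q : ℂ)) * ((fun i => ((u i q : ℝ) : ℂ)) ⬝ᵥ vl)
      = star vk ⬝ᵥ (P *ᵥ vl) := by
    refine (sum_dotProduct_col_mul_col_dotProduct (u.map ofReal) _ _).trans ?_
    rw [← transpose_map]
    exact congrArg (fun M => star vk ⬝ᵥ (M *ᵥ vl)) (Matrix.map_mul (f := ofRealHom)).symm
  rw [hsum]
  linear_combination hS / 2

/-- Vanishing of cross-channel sums over a Lagrangian frame: if `v_k ≠ v_l` are
orthonormal eigenvectors of `J` with the same eigenvalue `iσ`, then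
`Σ_q ⟨v_k, u_q⟩⟨u_q, v_l⟩ = 0` for any Lagrangian frame `u`. -/
theorem stmt12 (L : ℕ)
    (u : Matrix (Fin L ⊕ Fin L) (Fin L) ℝ)
    (hu_orth : uᵀ * u = 1)
    (hu_lag : uᵀ * Matrix.J (Fin L) ℝ * u = 0)
    (vk vl : (Fin L ⊕ Fin L) → ℂ)
    (σ : ℝ) (hσ : σ = 1 ∨ σ = -1)
    (hvk : (Matrix.J (Fin L) ℝ).map Complex.ofReal *ᵥ vk = (Complex.I * σ) • vk)
    (hvl : (Matrix.J (Fin L) ℝ).map Complex.ofReal *ᵥ vl = (Complex.I * σ) • vl)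
    (hnk : star vk ⬝ᵥ vk = 1) (hnl : star vl ⬝ᵥ vl = 1)
    (horth : star vk ⬝ᵥ vl = 0) (hne : vk ≠ vl) :
    ∑ q : Fin L,
        (star vk ⬝ᵥ fun i => (u i q : ℂ)) * ((fun i => ((u i q : ℝ) : ℂ)) ⬝ᵥ vl)
      = 0 :=
  stmt12_general L u hu_orth hu_lag vk vl σ hσ hvk hvl horth
end
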